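/- Let s∈(0,1), β>s, and let ν∈S^{n−1} be a unit vector. Let u be continuous on B_1, and for r∈(0,1) define Q_*(r) = (∫_{B_r} u(x)(x·ν)_+^s dx) / (∫_{B_r} (x·ν)_+^{2s} dx) and φ_r(x) = Q_*(r)(x·ν)_+^s. Assume that for some constant C_0 and all r∈(0,1), ‖u−φ_r‖_{L^∞(B_r)} ≤ C_0 r^β. Then there exists Q∈R with |Q| ≤ C(C_0 + ‖u‖_{L^∞(B_1)}) such that ‖u − Q(x·ν)_+^s‖_{L^∞(B_r)} ≤ C(C_0 + ‖u‖_{L^∞(B_1)}) r^β for all r∈(0,1), where C depends only on β and s. -/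

import Mathlib

open MeasureTheory Metric Set Filter
open scoped RealInnerProductSpace ENNReal Topology

noncomputable section

/-- The pointwise action of the stable operator of order `2s` with spectral measure `μ`:
`L u (x) = ∫_{S^{n-1}} ∫_ℝ (u(x+rθ)+u(x-rθ)-2u(x)) |r|^{-1-2s} dr dμ(θ)`. -/
def stableOp {n : ℕ} (s : ℝ) (μ : Measure (EuclideanSpace ℝ (Fin n)))
    (u : EuclideanSpace ℝ (Fin n) → ℝ) (x : EuclideanSpace ℝ (Fin n)) : ℝ :=
  ∫ θ, (∫ r : ℝ, (u (x + r • θ) + u (x - r • θ) - 2 * u x) * |r| ^ (-(1:ℝ) - 2*s)) ∂μ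

/-- The ellipticity conditions for the spectral measure `μ` of a stable operator of
order `2s`, with constants `0 < lam ≤ Lam`: `μ` is a nonnegative finite measure supported
on the unit sphere, `lam ≤ ∫_{S^{n-1}} |ν·θ|^{2s} dμ(θ)` for every unit vector `ν`,
and `μ(S^{n-1}) ≤ Lam`. -/
def IsElliptic {n : ℕ} (s lam Lam : ℝ) (μ : Measure (EuclideanSpace ℝ (Fin n))) : Prop :=
  μ (sphere (0 : EuclideanSpace ℝ (Fin n)) 1)ᶜ = 0 ∧
  (∀ ν : EuclideanSpace ℝ (Fin n), ‖ν‖ = 1 →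
    lam ≤ ∫ θ, |⟪ν, θ⟫| ^ (2*s) ∂μ) ∧
  μ Set.univ ≤ ENNReal.ofReal Lam

/-- `u` is a weak solution of `Lu = f` in the open set `U`:
`∫ u L η = ∫_U f η` for all test functions `η ∈ C_c^∞(U)`. -/
def IsWeakSol {n : ℕ} (s : ℝ) (μ : Measure (EuclideanSpace ℝ (Fin n)))
    (U : Set (EuclideanSpace ℝ (Fin n))) (u f : EuclideanSpace ℝ (Fin n) → ℝ) : Prop :=
  ∀ η : EuclideanSpace ℝ (Fin n) → ℝ, ContDiff ℝ (⊤ : ℕ∞) η → HasCompactSupport η →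
    tsupport η ⊆ U → ∫ x, u x * stableOp s μ η x = ∫ x in U, f x * η x

/-- `‖u‖_{C^γ(A)} ≤ K` : all derivatives up to order `⌊γ⌋` are bounded by `K` on `A`, and the
`⌊γ⌋`-th derivative is `(γ-⌊γ⌋)`-Hölder with constant `K` on `A`. -/
def HolderBdd {n : ℕ} (γ : ℝ) (A : Set (EuclideanSpace ℝ (Fin n)))
    (u : EuclideanSpace ℝ (Fin n) → ℝ) (K : ℝ) : Prop :=
  (∀ j : ℕ, j ≤ ⌊γ⌋₊ → ∀ x ∈ A, ‖iteratedFDeriv ℝ j u x‖ ≤ K) ∧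
  ∀ x ∈ A, ∀ y ∈ A,
    ‖iteratedFDeriv ℝ ⌊γ⌋₊ u x - iteratedFDeriv ℝ ⌊γ⌋₊ u y‖ ≤ K * ‖x - y‖ ^ (γ - ⌊γ⌋₊)

/-- `[u]_{C^γ(A)} ≤ K` : the seminorm bound only. -/
def HolderSemiBdd {n : ℕ} (γ : ℝ) (A : Set (EuclideanSpace ℝ (Fin n)))
    (u : EuclideanSpace ℝ (Fin n) → ℝ) (K : ℝ) : Prop :=
  ∀ x ∈ A, ∀ y ∈ A,
    ‖iteratedFDeriv ℝ ⌊γ⌋₊ u x - iteratedFDeriv ℝ ⌊γ⌋₊ u y‖ ≤ K * ‖x - y‖ ^ (γ - ⌊γ⌋₊)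

/-- The least-squares coefficient `Q_*(r)` of the best fit of `u` on `B_r` among multiples
of `(x·ν)_+^s`. -/
def bestFitCoeff {n : ℕ} (s : ℝ) (ν : EuclideanSpace ℝ (Fin n))
    (u : EuclideanSpace ℝ (Fin n) → ℝ) (r : ℝ) : ℝ :=
  (∫ x in ball (0 : EuclideanSpace ℝ (Fin n)) r, u x * (max ⟪x, ν⟫ 0) ^ s) /
  (∫ x in ball (0 : EuclideanSpace ℝ (Fin n)) r, (max ⟪x, ν⟫ 0) ^ (2*s))

lemma abstract_limit (ε A : ℝ) (hε : 0 < ε) (hA : 0 ≤ A) (f : ℝ → ℝ)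
    (H : ∀ ρ r : ℝ, 0 < ρ → r/2 ≤ ρ → ρ ≤ r → r < 1 → |f r - f ρ| ≤ A * r ^ ε) :
    ∃ Q : ℝ, ∀ r : ℝ, 0 < r → r < 1 →
      |f r - Q| ≤ A * ((1 - (2:ℝ) ^ (-ε))⁻¹ + 1) * r ^ ε := by
  set q : ℝ := (2:ℝ) ^ (-ε) with hqdef
  have hq0 : 0 < q := Real.rpow_pos_of_pos (by norm_num) _
  have hq1 : q < 1 := Real.rpow_lt_one_of_one_lt_of_neg (by norm_num) (by linarith)
  set M : ℝ := A * ((1 - q)⁻¹ + 1) with hMdef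
  have hM0 : 0 ≤ M := by
    have h1 : (0:ℝ) ≤ (1 - q)⁻¹ := inv_nonneg.mpr (by linarith)
    have : (0:ℝ) ≤ (1 - q)⁻¹ + 1 := by linarith
    exact mul_nonneg hA this
  have hpow : ∀ (r : ℝ) (k : ℕ), 0 ≤ r → (r / 2 ^ k) ^ ε = r ^ ε * q ^ k := by
    intro r k hr
    rw [Real.div_rpow hr (by positivity), hqdef,
      ← Real.rpow_natCast (2:ℝ) k, ← Real.rpow_natCast ((2:ℝ) ^ (-ε)) k,
      ← Real.rpow_mul (by norm_num : (0:ℝ) ≤ 2),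
      ← Real.rpow_mul (by norm_num : (0:ℝ) ≤ 2), neg_mul,
      Real.rpow_neg (by norm_num : (0:ℝ) ≤ 2), mul_comm ε (k:ℝ), div_eq_mul_inv]
  have hgeo : ∀ k : ℕ, ∑ j ∈ Finset.range k, q ^ j ≤ (1 - q)⁻¹ := by
    intro k
    rw [geom_sum_eq hq1.ne]
    have h1 : (0:ℝ) < 1 - q := by linarith
    have heq : (q ^ k - 1) / (q - 1) = (1 - q ^ k) / (1 - q) := by
      rw [div_eq_div_iff (by linarith) (by linarith)]; ring
    rw [heq, inv_eq_one_div]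
    have : 0 ≤ q ^ k := by positivity
    gcongr
    linarith
  have chain : ∀ (r : ℝ), 0 < r → r < 1 → ∀ k : ℕ,
      |f r - f (r / 2 ^ k)| ≤ A * r ^ ε * ∑ j ∈ Finset.range k, q ^ j := by
    intro r hr hr1 k
    induction k with
    | zero => simp
    | succ k ih =>
      have hdiveq : r / 2 ^ (k+1) = (r / 2 ^ k) / 2 := by
        rw [pow_succ]; ring
      have hstep : |f (r / 2 ^ k) - f (r / 2 ^ (k+1))| ≤ A * (r / 2 ^ k) ^ ε := by
        apply H (r / 2 ^ (k+1)) (r / 2 ^ k) (by positivity) (le_of_eq hdiveq.symm)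
          (by rw [hdiveq]; linarith [div_nonneg hr.le (by positivity : (0:ℝ) ≤ (2:ℝ)^k)])
        calc r / 2 ^ k ≤ r := by
              apply div_le_self hr.le; exact one_le_pow₀ (by norm_num)
          _ < 1 := hr1
      calc |f r - f (r / 2 ^ (k+1))|
          ≤ |f r - f (r / 2 ^ k)| + |f (r / 2 ^ k) - f (r / 2 ^ (k+1))| := abs_sub_le _ _ _
        _ ≤ A * r ^ ε * ∑ j ∈ Finset.range k, q ^ j + A * (r ^ ε * q ^ k) := by
            rw [← hpow r k hr.le]; linarith
        _ = A * r ^ ε * ∑ j ∈ Finset.range (k+1), q ^ j := by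
            rw [Finset.sum_range_succ]; ring
  have L : ∀ ρ r : ℝ, 0 < ρ → ρ ≤ r → r < 1 → |f r - f ρ| ≤ M * r ^ ε := by
    intro ρ r hρ hρr hr1
    have hr : 0 < r := lt_of_lt_of_le hρ hρr
    have hex : ∃ k : ℕ, r / 2 ^ k < 2 * ρ := by
      obtain ⟨k, hk⟩ := pow_unbounded_of_one_lt (r / (2 * ρ)) (by norm_num : (1:ℝ) < 2)
      refine ⟨k, ?_⟩
      rw [div_lt_iff₀ (by positivity)]
      calc r = (r / (2 * ρ)) * (2 * ρ) := by field_simp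
        _ < 2 ^ k * (2 * ρ) := by
            apply mul_lt_mul_of_pos_right hk (by positivity)
        _ = 2 * ρ * 2 ^ k := by ring
    classical
    set k := Nat.find hex with hkdef
    have hklt : r / 2 ^ k < 2 * ρ := Nat.find_spec hex
    have hle : ρ ≤ r / 2 ^ k := by
      rcases Nat.eq_zero_or_pos k with h0 | hpos
      · rw [h0]; simpa using hρr
      · have := Nat.find_min hex (Nat.sub_lt hpos one_pos)
        push_neg at this
        have hk1 : k - 1 + 1 = k := Nat.succ_pred_eq_of_pos hpos
        have : 2 * ρ ≤ r / 2 ^ (k - 1) := this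
        rw [le_div_iff₀ (by positivity)] at this
        rw [le_div_iff₀ (by positivity)]
        calc ρ * 2 ^ k = (2 * ρ) * 2 ^ (k-1) := by
              have h2k : (2:ℝ) ^ k = 2 ^ (k-1) * 2 := by rw [← pow_succ, hk1]
              rw [h2k]; ring
          _ ≤ (r / 2 ^ (k-1)) * 2 ^ (k-1) := by
              apply mul_le_mul_of_nonneg_right _ (by positivity)
              rw [le_div_iff₀ (by positivity)]; exact this
          _ = r := by field_simp
    have hrk1 : r / 2 ^ k < 1 := lt_of_le_of_lt (div_le_self hr.le (one_le_pow₀ (by norm_num))) hr1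
    have h2 : |f (r / 2 ^ k) - f ρ| ≤ A * (r / 2 ^ k) ^ ε :=
      H ρ (r / 2 ^ k) hρ (by linarith) hle hrk1
    have h3 : (r / 2 ^ k) ^ ε ≤ r ^ ε :=
      Real.rpow_le_rpow (by positivity) (div_le_self hr.le (one_le_pow₀ (by norm_num))) hε.le
    calc |f r - f ρ| ≤ |f r - f (r / 2 ^ k)| + |f (r / 2 ^ k) - f ρ| := abs_sub_le _ _ _
      _ ≤ A * r ^ ε * (1 - q)⁻¹ + A * r ^ ε := by
          have h1 := chain r hr hr1 k
          have h1' : |f r - f (r / 2 ^ k)| ≤ A * r ^ ε * (1 - q)⁻¹ := by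
            refine h1.trans ?_
            apply mul_le_mul_of_nonneg_left (hgeo k) (by positivity)
          have h2' : A * (r / 2 ^ k) ^ ε ≤ A * r ^ ε := mul_le_mul_of_nonneg_left h3 hA
          linarith
      _ = M * r ^ ε := by rw [hMdef]; ring
  -- the Cauchy sequence
  set a : ℕ → ℝ := fun k => f (1 / 2 ^ (k+1)) with hadef
  have habound : ∀ N n : ℕ, N ≤ n → |a N - a n| ≤ M * q ^ (N+1) := by
    intro N n hNn
    have h1 : (0:ℝ) < 1 / 2 ^ (n+1) := by positivity
    have h2 : (1:ℝ) / 2 ^ (n+1) ≤ 1 / 2 ^ (N+1) := by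
      apply div_le_div_of_nonneg_left (by norm_num) (by positivity)
      exact pow_le_pow_right₀ (by norm_num) (by omega)
    have h3 : (1:ℝ) / 2 ^ (N+1) < 1 := by
      rw [div_lt_one (by positivity)]
      exact one_lt_pow₀ (by norm_num) (by omega)
    have := L (1 / 2 ^ (n+1)) (1 / 2 ^ (N+1)) h1 h2 h3
    have he : ((1:ℝ) / 2 ^ (N+1)) ^ ε = q ^ (N+1) := by
      rw [hpow 1 (N+1) (by norm_num), Real.one_rpow, one_mul]
    rw [he] at this
    exact this
  have hcauchy : CauchySeq a := by
    apply cauchySeq_of_le_tendsto_0 (fun N => 2 * M * q ^ (N+1))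
    · intro n m N hn hm
      rw [Real.dist_eq]
      have t1 := habound N n hn
      have t2 := habound N m hm
      calc |a n - a m| ≤ |a N - a n| + |a N - a m| := by
            rw [abs_sub_comm (a N) (a n)]; exact abs_sub_le _ _ _
        _ ≤ 2 * M * q ^ (N+1) := by linarith
    · have hq : Tendsto (fun n : ℕ => q ^ n) atTop (𝓝 0) :=
        tendsto_pow_atTop_nhds_zero_of_lt_one hq0.le hq1
      have : Tendsto (fun N : ℕ => 2 * M * q ^ (N+1)) atTop (𝓝 (2 * M * 0)) := by
        apply Tendsto.const_mul
        exact hq.comp (tendsto_add_atTop_nat 1)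
      simpa using this
  obtain ⟨Q, hQ⟩ := cauchySeq_tendsto_of_complete hcauchy
  refine ⟨Q, fun r hr hr1 => ?_⟩
  have htend : Tendsto (fun k => |f r - a k|) atTop (𝓝 |f r - Q|) :=
    (tendsto_const_nhds.sub hQ).abs
  apply le_of_tendsto htend
  have hsmall : Tendsto (fun k : ℕ => (1:ℝ) / 2 ^ (k+1)) atTop (𝓝 0) := by
    have : Tendsto (fun k : ℕ => ((1:ℝ)/2) ^ k) atTop (𝓝 0) :=
      tendsto_pow_atTop_nhds_zero_of_lt_one (by norm_num) (by norm_num)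
    have := this.comp (tendsto_add_atTop_nat 1)
    simpa [one_div, inv_pow, Function.comp_def] using this
  have hev : ∀ᶠ k : ℕ in atTop, (1:ℝ) / 2 ^ (k+1) ≤ r :=
    hsmall.eventually_le_const hr
  filter_upwards [hev] with k hk
  exact L (1 / 2 ^ (k+1)) r (by positivity) hk hr1

/-- **Convergence of the blow-up coefficients (Lemma 5.3).**
Let `s ∈ (0,1)`, `β > s`, and `ν ∈ S^{n-1}`. Let `u` be continuous on `B_1` and set
`φ_r(x) = Q_*(r)(x·ν)_+^s`, where `Q_*(r)` is the least-squares best-fit coefficient.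
If `‖u - φ_r‖_{L^∞(B_r)} ≤ C₀ r^β` for all `r ∈ (0,1)`, then there is `Q ∈ ℝ` with
`|Q| ≤ C (C₀ + ‖u‖_{L^∞(B_1)})` such that
`‖u - Q (x·ν)_+^s‖_{L^∞(B_r)} ≤ C (C₀ + ‖u‖_{L^∞(B_1)}) r^β` for all `r ∈ (0,1)`,
where `C` depends only on `β` and `s`. -/
theorem best_fit_limit (s β : ℝ) (hs0 : 0 < s) (hs1 : s < 1) (hβ : s < β) :
    ∃ C > 0, ∀ (n : ℕ) (ν : EuclideanSpace ℝ (Fin n))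
      (u : EuclideanSpace ℝ (Fin n) → ℝ) (C₀ Mu : ℝ),
      ‖ν‖ = 1 →
      ContinuousOn u (ball (0 : EuclideanSpace ℝ (Fin n)) 1) →
      (∀ x ∈ ball (0 : EuclideanSpace ℝ (Fin n)) 1, |u x| ≤ Mu) →
      (∀ r : ℝ, 0 < r → r < 1 → ∀ x ∈ ball (0 : EuclideanSpace ℝ (Fin n)) r,
        |u x - bestFitCoeff s ν u r * (max ⟪x, ν⟫ 0) ^ s| ≤ C₀ * r ^ β) →
      ∃ Q : ℝ, |Q| ≤ C * (C₀ + Mu) ∧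
        ∀ r : ℝ, 0 < r → r < 1 → ∀ x ∈ ball (0 : EuclideanSpace ℝ (Fin n)) r,
          |u x - Q * (max ⟪x, ν⟫ 0) ^ s| ≤ C * (C₀ + Mu) * r ^ β := by
  have hε : 0 < β - s := by linarith
  have hβ0 : 0 < β := by linarith
  set q : ℝ := (2:ℝ) ^ (-(β - s)) with hqdef
  have hq1 : q < 1 := Real.rpow_lt_one_of_one_lt_of_neg (by norm_num) (by linarith)
  have h4pos : (0:ℝ) < (4:ℝ) ^ s := Real.rpow_pos_of_pos (by norm_num) _
  have h4s : (1:ℝ) ≤ (4:ℝ) ^ s := Real.one_le_rpow (by norm_num) hs0.le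
  have hinv : (0:ℝ) ≤ (1 - q)⁻¹ := inv_nonneg.mpr (by linarith)
  set M₀ : ℝ := 2 * (4:ℝ) ^ s * ((1 - q)⁻¹ + 1) with hM₀def
  have hM₀0 : 0 ≤ M₀ := by
    apply mul_nonneg (by positivity); linarith
  refine ⟨1 + M₀ + 4 ^ s, by positivity, ?_⟩
  intro n ν u C₀ Mu hν hu hMu hyp
  set f : ℝ → ℝ := bestFitCoeff s ν u with hfdef
  -- inner product of scalar multiples of ν
  have hinner : ∀ c : ℝ, ⟪(c • ν : EuclideanSpace ℝ (Fin n)), ν⟫ = c := by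
    intro c
    rw [real_inner_smul_left, real_inner_self_eq_norm_sq, hν]
    ring
  have hnorm : ∀ c : ℝ, 0 ≤ c → ‖(c • ν : EuclideanSpace ℝ (Fin n))‖ = c := by
    intro c hc
    rw [norm_smul, hν, mul_one, Real.norm_eq_abs, abs_of_nonneg hc]
  -- C₀ ≥ 0
  have hC₀ : 0 ≤ C₀ := by
    have h0 := hyp (1/2) (by norm_num) (by norm_num) 0 (mem_ball_self (by norm_num))
    have hz : (max ⟪(0 : EuclideanSpace ℝ (Fin n)), ν⟫ 0 : ℝ) ^ s = 0 := by
      rw [inner_zero_left, max_self, Real.zero_rpow hs0.ne']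
    rw [hz, mul_zero, sub_zero] at h0
    have hp : (0:ℝ) < (1/2:ℝ) ^ β := Real.rpow_pos_of_pos (by norm_num) _
    nlinarith [abs_nonneg (u 0)]
  have hMu0 : 0 ≤ Mu := le_trans (abs_nonneg _) (hMu 0 (mem_ball_self one_pos))
  -- adjacent-scale estimate
  have key : ∀ ρ r : ℝ, 0 < ρ → r/2 ≤ ρ → ρ ≤ r → r < 1 →
      |f r - f ρ| ≤ (2 * 4 ^ s * C₀) * r ^ (β - s) := by
    intro ρ r hρ hhalf hρr hr1
    have hr : 0 < r := lt_of_lt_of_le hρ hρr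
    set y : EuclideanSpace ℝ (Fin n) := (ρ/2) • ν with hydef
    have hny : ‖y‖ = ρ/2 := hnorm _ (by linarith)
    have hyρ : y ∈ ball (0 : EuclideanSpace ℝ (Fin n)) ρ := by
      rw [mem_ball_zero_iff, hny]; linarith
    have hyr : y ∈ ball (0 : EuclideanSpace ℝ (Fin n)) r := by
      rw [mem_ball_zero_iff, hny]; linarith
    have hmax : max ⟪y, ν⟫ 0 = ρ/2 := by
      rw [hydef, hinner]; exact max_eq_left (by linarith)
    have h1 := hyp ρ hρ (lt_of_le_of_lt hρr hr1) y hyρ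
    have h2 := hyp r hr hr1 y hyr
    rw [hmax] at h1 h2
    have htnn : (0:ℝ) ≤ (ρ/2) ^ s := Real.rpow_nonneg (by linarith) _
    have hρβ : ρ ^ β ≤ r ^ β := Real.rpow_le_rpow hρ.le hρr hβ0.le
    have htri : |f r - f ρ| * (ρ/2) ^ s ≤ 2 * C₀ * r ^ β := by
      have heq : |f r - f ρ| * (ρ/2) ^ s = |f r * (ρ/2) ^ s - f ρ * (ρ/2) ^ s| := by
        rw [← sub_mul, abs_mul, abs_of_nonneg htnn]
      rw [heq]
      calc |f r * (ρ/2) ^ s - f ρ * (ρ/2) ^ s|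
          ≤ |f r * (ρ/2) ^ s - u y| + |u y - f ρ * (ρ/2) ^ s| := abs_sub_le _ _ _
        _ ≤ C₀ * r ^ β + C₀ * ρ ^ β := by
            rw [abs_sub_comm]; exact add_le_add h2 h1
        _ ≤ 2 * C₀ * r ^ β := by nlinarith
    have hcmp : (r/4) ^ s ≤ (ρ/2) ^ s :=
      Real.rpow_le_rpow (by linarith) (by linarith) hs0.le
    have hr4pos : (0:ℝ) < (r/4) ^ s := Real.rpow_pos_of_pos (by linarith) _
    have hstep : |f r - f ρ| ≤ 2 * C₀ * r ^ β / (r/4) ^ s := by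
      rw [le_div_iff₀ hr4pos]
      calc |f r - f ρ| * (r/4) ^ s ≤ |f r - f ρ| * (ρ/2) ^ s :=
            mul_le_mul_of_nonneg_left hcmp (abs_nonneg _)
        _ ≤ 2 * C₀ * r ^ β := htri
    refine hstep.trans (le_of_eq ?_)
    rw [Real.div_rpow hr.le (by norm_num : (0:ℝ) ≤ 4), Real.rpow_sub hr]
    have h1 : r ^ s ≠ 0 := (Real.rpow_pos_of_pos hr s).ne'
    field_simp
  -- apply the abstract limit lemma
  obtain ⟨Q, hQ⟩ := abstract_limit (β - s) (2 * 4 ^ s * C₀) hε (by positivity) f key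
  have hQ' : ∀ r : ℝ, 0 < r → r < 1 → |f r - Q| ≤ M₀ * C₀ * r ^ (β - s) := by
    intro r hr hr1
    refine (hQ r hr hr1).trans (le_of_eq ?_)
    rw [hM₀def, hqdef]; ring
  -- bound on |f (1/2)|
  have hf12 : |f (1/2)| ≤ (C₀ + Mu) * 4 ^ s := by
    set y : EuclideanSpace ℝ (Fin n) := ((1:ℝ)/4) • ν with hydef
    have hny : ‖y‖ = 1/4 := hnorm _ (by norm_num)
    have hyr : y ∈ ball (0 : EuclideanSpace ℝ (Fin n)) (1/2) := by
      rw [mem_ball_zero_iff, hny]; norm_num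
    have hy1 : y ∈ ball (0 : EuclideanSpace ℝ (Fin n)) 1 := by
      rw [mem_ball_zero_iff, hny]; norm_num
    have hmax : max ⟪y, ν⟫ 0 = 1/4 := by
      rw [hydef, hinner]; exact max_eq_left (by norm_num)
    have h1 := hyp (1/2) (by norm_num) (by norm_num) y hyr
    rw [hmax] at h1
    have h2 := hMu y hy1
    have h12β : ((1:ℝ)/2) ^ β ≤ 1 := Real.rpow_le_one (by norm_num) (by norm_num) hβ0.le
    have h14 : ((1:ℝ)/4) ^ s = ((4:ℝ) ^ s)⁻¹ := by
      rw [one_div, Real.inv_rpow (by norm_num : (0:ℝ) ≤ 4)]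
    have hb : |f (1/2)| * ((4:ℝ) ^ s)⁻¹ ≤ C₀ + Mu := by
      rw [← h14]
      have heq : |f (1/2)| * ((1:ℝ)/4) ^ s = |f (1/2) * ((1:ℝ)/4) ^ s| := by
        rw [abs_mul, abs_of_nonneg (Real.rpow_nonneg (by norm_num) _)]
      rw [heq]
      calc |f (1/2) * ((1:ℝ)/4) ^ s|
          ≤ |f (1/2) * ((1:ℝ)/4) ^ s - u y| + |u y| := by
            have := abs_sub_le (f (1/2) * ((1:ℝ)/4) ^ s) (u y) 0
            simpa using this
        _ ≤ C₀ * ((1:ℝ)/2) ^ β + Mu := by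
            rw [abs_sub_comm] at h1; exact add_le_add h1 h2
        _ ≤ C₀ + Mu := by nlinarith
    rw [← div_le_iff₀ h4pos]
    calc |f (1/2)| / 4 ^ s = |f (1/2)| * ((4:ℝ) ^ s)⁻¹ := by rw [div_eq_mul_inv]
      _ ≤ C₀ + Mu := hb
  refine ⟨Q, ?_, ?_⟩
  · -- |Q| bound
    have h1 := hQ' (1/2) (by norm_num) (by norm_num)
    have h12 : ((1:ℝ)/2) ^ (β - s) ≤ 1 := Real.rpow_le_one (by norm_num) (by norm_num) hε.le
    have h2 : |Q| ≤ |f (1/2) - Q| + |f (1/2)| := by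
      calc |Q| = |f (1/2) - (f (1/2) - Q)| := by ring_nf
        _ ≤ |f (1/2)| + |f (1/2) - Q| := abs_sub _ _
        _ = |f (1/2) - Q| + |f (1/2)| := by ring
    have hMC : M₀ * C₀ * ((1:ℝ)/2) ^ (β - s) ≤ M₀ * C₀ := by
      nlinarith [mul_nonneg hM₀0 hC₀]
    nlinarith [mul_nonneg hM₀0 hMu0]
  · intro r hr hr1 x hx
    set t : ℝ := max ⟪x, ν⟫ 0 with htdef
    have ht0 : 0 ≤ t := le_max_right _ _
    have htr : t ≤ r := by
      apply max_le _ hr.le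
      calc ⟪x, ν⟫ ≤ ‖x‖ * ‖ν‖ := real_inner_le_norm _ _
        _ = ‖x‖ := by rw [hν, mul_one]
        _ ≤ r := (mem_ball_zero_iff.mp hx).le
    have hts : t ^ s ≤ r ^ s := Real.rpow_le_rpow ht0 htr hs0.le
    have h1 := hyp r hr hr1 x hx
    have h2 := hQ' r hr hr1
    have hrs : (0:ℝ) ≤ r ^ s := Real.rpow_nonneg hr.le _
    have hmul : |f r - Q| * t ^ s ≤ M₀ * C₀ * r ^ (β - s) * r ^ s := by
      apply mul_le_mul h2 hts (Real.rpow_nonneg ht0 _)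
      positivity
    have hrβ : r ^ (β - s) * r ^ s = r ^ β := by
      rw [← Real.rpow_add hr]; ring_nf
    have hfinal : |u x - Q * t ^ s| ≤ C₀ * r ^ β + M₀ * C₀ * r ^ β := by
      calc |u x - Q * t ^ s|
          ≤ |u x - f r * t ^ s| + |f r * t ^ s - Q * t ^ s| := abs_sub_le _ _ _
        _ ≤ C₀ * r ^ β + M₀ * C₀ * r ^ β := by
            have heq : |f r * t ^ s - Q * t ^ s| = |f r - Q| * t ^ s := by
              rw [← sub_mul, abs_mul, abs_of_nonneg (Real.rpow_nonneg ht0 _)]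
            rw [heq]
            have := hmul.trans (le_of_eq (by rw [mul_assoc, hrβ]))
            exact add_le_add h1 this
    refine hfinal.trans ?_
    have hrβpos : (0:ℝ) ≤ r ^ β := Real.rpow_nonneg hr.le _
    clear_value t f M₀ q
    have hnn : 0 ≤ (Mu + M₀ * Mu + 4 ^ s * C₀ + 4 ^ s * Mu) * r ^ β := by
      apply mul_nonneg _ hrβpos
      have p1 := mul_nonneg hM₀0 hMu0
      have p2 := mul_nonneg h4pos.le hC₀
      have p3 := mul_nonneg h4pos.le hMu0
      linarith
    have hexp : (1 + M₀ + 4 ^ s) * (C₀ + Mu) * r ^ β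
        = C₀ * r ^ β + M₀ * C₀ * r ^ β
          + (Mu + M₀ * Mu + 4 ^ s * C₀ + 4 ^ s * Mu) * r ^ β := by ring
    linarith
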